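/- arXiv:1101.5769 — 3 statements merged into one kernel-verified Lean document; each statement's English description precedes it below -/
import Mathlib

section
/- Let n ≥ 1. The set of maps X : ℝⁿ → ℝⁿ of the form X(x) = B x + ⟨A, x⟩ x + C, where B ranges over linear maps ℝⁿ → ℝⁿ and A, C range over vectors in ℝⁿ, is a real vector space of dimension exactly n(n+2) = n² + 2n; equivalently, the linear map (B, A, C) ↦ (x ↦ B x + ⟨A, x⟩ x + C) is injective. -/
/-!
Evaluating `X x = B x + ⟪A, x⟫ • x + C` at `0` gives `C`. Once `C = 0`, the terms `B x` and
`⟪A, x⟫ • x` are respectively odd and even in `x`, so `X x + X (-x) = 2 ⟪A, x⟫ • x`; at `x = A` this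
is `2 ‖A‖² A`, forcing `A = 0` and then `B = 0`. Hence the parametrization `(B, A, C) ↦ X` is an
injective linear map, and its image has the dimension of its domain, `n² + n + n`.
-/

open scoped RealInnerProductSpace

variable {E : Type*} [NormedAddCommGroup E] [InnerProductSpace ℝ E]

variable (E) in
noncomputable def projCollineation : ((E →ₗ[ℝ] E) × E × E) →ₗ[ℝ] (E → E) where
  toFun p x := p.1 x + ⟪p.2.1, x⟫ • x + p.2.2
  map_add' p q := by
    funext x
    simp only [Prod.fst_add, Prod.snd_add, LinearMap.add_apply, inner_add_left, add_smul,
      Pi.add_apply]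
    abel
  map_smul' c p := by
    funext x
    simp only [Prod.smul_fst, Prod.smul_snd, LinearMap.smul_apply, real_inner_smul_left,
      RingHom.id_apply, Pi.smul_apply, smul_add, smul_smul]

theorem projCollineation_apply (p : (E →ₗ[ℝ] E) × E × E) (x : E) :
    projCollineation E p x = p.1 x + ⟪p.2.1, x⟫ • x + p.2.2 :=
  rfl

theorem eq_zero_of_forall_inner_smul_self_eq_zero {A : E} (h : ∀ x : E, ⟪A, x⟫ • x = 0) :
    A = 0 := by
  rcases smul_eq_zero.mp (h A) with hA | hA
  · exact inner_self_eq_zero.mp hA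
  · exact hA

theorem projCollineation_injective : Function.Injective (projCollineation E) := by
  refine (injective_iff_map_eq_zero _).mpr fun ⟨B, A, C⟩ hX => ?_
  have hX' (x : E) : B x + ⟪A, x⟫ • x + C = 0 := congrFun hX x
  have hC : C = 0 := by simpa using hX' 0
  subst hC
  have hA : A = 0 := by
    refine eq_zero_of_forall_inner_smul_self_eq_zero fun x => ?_
    have hsum : (2 : ℝ) • (⟪A, x⟫ • x) = 0 := by
      have hneg := hX' (-x)
      simp only [map_neg, inner_neg_right, neg_smul, smul_neg, neg_neg, add_zero] at hneg
      linear_combination (norm := module) hX' x + hneg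
    exact (smul_eq_zero.mp hsum).resolve_left two_ne_zero
  subst hA
  have hB : B = 0 := LinearMap.ext fun x => by simpa using hX' x
  rw [hB]
  rfl

theorem finrank_range_projCollineation [FiniteDimensional ℝ E] :
    Module.finrank ℝ (LinearMap.range (projCollineation E)) =
      Module.finrank ℝ E * (Module.finrank ℝ E + 2) := by
  rw [LinearMap.finrank_range_of_inj projCollineation_injective, Module.finrank_prod,
    Module.finrank_prod, Module.finrank_linearMap]
  ring

theorem projective_collineations_dimension_general (n : ℕ) :
    (∃ S : Submodule ℝ (EuclideanSpace ℝ (Fin n) → EuclideanSpace ℝ (Fin n)),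
      (↑S = {X : EuclideanSpace ℝ (Fin n) → EuclideanSpace ℝ (Fin n) |
          ∃ (B : EuclideanSpace ℝ (Fin n) →ₗ[ℝ] EuclideanSpace ℝ (Fin n))
            (A C : EuclideanSpace ℝ (Fin n)),
            ∀ x : EuclideanSpace ℝ (Fin n), X x = B x + ⟪A, x⟫ • x + C}) ∧
      Module.finrank ℝ S = n * (n + 2)) ∧
    Function.Injective
      (fun p : (EuclideanSpace ℝ (Fin n) →ₗ[ℝ] EuclideanSpace ℝ (Fin n)) ×
          EuclideanSpace ℝ (Fin n) × EuclideanSpace ℝ (Fin n) =>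
        fun x : EuclideanSpace ℝ (Fin n) => p.1 x + ⟪p.2.1, x⟫ • x + p.2.2) := by
  refine ⟨⟨LinearMap.range (projCollineation _), ?_, ?_⟩, projCollineation_injective⟩
  · ext X
    constructor
    · rintro ⟨⟨B, A, C⟩, rfl⟩
      exact ⟨B, A, C, fun x => rfl⟩
    · rintro ⟨B, A, C, hX⟩
      exact ⟨(B, A, C), funext fun x => (hX x).symm⟩
  · simpa using finrank_range_projCollineation (E := EuclideanSpace ℝ (Fin n))

/-- The set of maps `X : ℝⁿ → ℝⁿ` of the form
`X x = B x + ⟨A, x⟩ x + C` is a real vector space of dimension exactly `n(n+2)`;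
equivalently, the linear parametrization `(B, A, C) ↦ X` is injective. -/
theorem projective_collineations_dimension (n : ℕ) (hn : 1 ≤ n) :
    (∃ S : Submodule ℝ (EuclideanSpace ℝ (Fin n) → EuclideanSpace ℝ (Fin n)),
      (↑S = {X : EuclideanSpace ℝ (Fin n) → EuclideanSpace ℝ (Fin n) |
          ∃ (B : EuclideanSpace ℝ (Fin n) →ₗ[ℝ] EuclideanSpace ℝ (Fin n))
            (A C : EuclideanSpace ℝ (Fin n)),
            ∀ x : EuclideanSpace ℝ (Fin n), X x = B x + ⟪A, x⟫ • x + C}) ∧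
      Module.finrank ℝ S = n * (n + 2)) ∧
    Function.Injective
      (fun p : (EuclideanSpace ℝ (Fin n) →ₗ[ℝ] EuclideanSpace ℝ (Fin n)) ×
          EuclideanSpace ℝ (Fin n) × EuclideanSpace ℝ (Fin n) =>
        fun x : EuclideanSpace ℝ (Fin n) => p.1 x + ⟪p.2.1, x⟫ • x + p.2.2) :=
  projective_collineations_dimension_general n
end

section
/- Suppose ξ : ℝⁿ → ℝⁿ is a continuously differentiable family of covector components and ψ ∈ ℝ is a constant such that the homothetic equation ∂_j ξ_i(x) + ∂_i ξ_j(x) − 2 Σ_l Γ^l_{ij}(x) ξ_l(x) = 2 ψ g_{ij}(x) holds for all x and all i, j. Then along every geodesic of g the quantity ψ s Σ_{i,j} g_{ij}(x(s)) ẋ^i(s) ẋ^j(s) − Σ_i ξ_i(x(s)) ẋ^i(s) is constant in s; a homothetic Killing vector gives the Noether first integral φ = t ψ g_{ij} ẋ^i ẋ^j − g_{ij} H^i ẋ^j of the geodesic Lagrangian. -/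
/-- The Christoffel symbols `Γ^i_{jk}(x) = ½ Σ_l (g(x)⁻¹)_{il}
(∂_j g_{lk}(x) + ∂_k g_{lj}(x) − ∂_l g_{jk}(x))` of a metric `g` on `ℝⁿ`,
given in coordinates; `∂_j` is the directional derivative along `Pi.single j 1`. -/
noncomputable def christoffel {n : ℕ} (g : (Fin n → ℝ) → Matrix (Fin n) (Fin n) ℝ)
    (i j k : Fin n) (x : Fin n → ℝ) : ℝ :=
  (1 / 2) * ∑ l, (g x)⁻¹ i l *
    (fderiv ℝ (fun y => g y l k) x (Pi.single j 1)
      + fderiv ℝ (fun y => g y l j) x (Pi.single k 1)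
      - fderiv ℝ (fun y => g y j k) x (Pi.single l 1))

/-- A geodesic of `g`: a twice continuously differentiable curve `γ : ℝ → ℝⁿ` with
`ẍ^i = −Σ_{j,k} Γ^i_{jk}(x) ẋ^j ẋ^k`. -/
def IsGeodesic {n : ℕ} (g : (Fin n → ℝ) → Matrix (Fin n) (Fin n) ℝ)
    (γ : ℝ → Fin n → ℝ) : Prop :=
  (∀ i, ContDiff ℝ 2 (fun s => γ s i)) ∧
  ∀ s i, deriv (deriv (fun t => γ t i)) s =
    - ∑ j, ∑ k, christoffel g i j k (γ s) *
      deriv (fun t => γ t j) s * deriv (fun t => γ t k) s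

/-!
Along a geodesic the energy `E = g(ẋ, ẋ)` is conserved: contracting the geodesic equation with
`g(ẋ, ·)` and lowering the Christoffel symbols gives `Γ_{m,pq} ẋ^m ẋ^p ẋ^q = ½ ∂_ẋ g(ẋ, ẋ)`,
which cancels the derivative of `g` along the curve. Contracting the homothetic equation with
`ẋ^i ẋ^j` shows `d/ds (ξ_i ẋ^i) = ψ E`. Hence `d/ds (ψ s E − ξ_i ẋ^i) = ψ E − ψ E = 0`.
-/

open Matrix

lemma apply_eq_sum_mul_apply_single {ι : Type*} [Fintype ι] [DecidableEq ι]
    (L : (ι → ℝ) →L[ℝ] ℝ) (w : ι → ℝ) : L w = ∑ j, w j * L (Pi.single j 1) := by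
  conv_lhs => rw [pi_eq_sum_univ' w]
  simp [map_sum]

variable {n : ℕ}

noncomputable def christoffelQuad (g : (Fin n → ℝ) → Matrix (Fin n) (Fin n) ℝ)
    (x v : Fin n → ℝ) (i : Fin n) : ℝ :=
  ∑ j, ∑ k, christoffel g i j k x * v j * v k

section Christoffel

variable (g : (Fin n → ℝ) → Matrix (Fin n) (Fin n) ℝ) (x : Fin n → ℝ)

lemma sum_mul_christoffel (hg : IsUnit (g x).det) (m j k : Fin n) :
    ∑ i, g x m i * christoffel g i j k x
      = (1 / 2) * (fderiv ℝ (fun y => g y m k) x (Pi.single j 1)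
          + fderiv ℝ (fun y => g y m j) x (Pi.single k 1)
          - fderiv ℝ (fun y => g y j k) x (Pi.single m 1)) := by
  set T : Fin n → ℝ := fun l =>
    fderiv ℝ (fun y => g y l k) x (Pi.single j 1)
      + fderiv ℝ (fun y => g y l j) x (Pi.single k 1)
      - fderiv ℝ (fun y => g y j k) x (Pi.single l 1)
  have hΓ : ∀ i, christoffel g i j k x = (1 / 2) * ((g x)⁻¹ *ᵥ T) i := fun i => rfl
  simp_rw [hΓ, mul_left_comm _ (1 / 2 : ℝ), ← Finset.mul_sum]
  change (1 / 2) * (g x *ᵥ ((g x)⁻¹ *ᵥ T)) m = _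
  rw [mulVec_mulVec, mul_nonsing_inv _ hg, one_mulVec]

lemma sum_metric_mul_christoffelQuad (hg : IsUnit (g x).det) (v : Fin n → ℝ) :
    ∑ i, ∑ j, g x i j * v i * christoffelQuad g x v j
      = (1 / 2) * ∑ i, ∑ j, fderiv ℝ (fun y => g y i j) x v * v i * v j := by
  set D : Fin n → Fin n → Fin n → ℝ := fun l a b => fderiv ℝ (fun y => g y a b) x (Pi.single l 1)
  set C := ∑ a, ∑ b, ∑ l, v l * v a * v b * D l a b
  have hC : ∑ a, ∑ b, fderiv ℝ (fun y => g y a b) x v * v a * v b = C := by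
    simp only [C, D, apply_eq_sum_mul_apply_single _ v, Finset.sum_mul]
    exact Finset.sum_congr rfl fun a _ => Finset.sum_congr rfl fun b _ =>
      Finset.sum_congr rfl fun l _ => by ring
  have h1 : ∑ i, ∑ p, ∑ q, v i * v p * v q * D p i q = C :=
    Finset.sum_congr rfl fun i _ => by
      rw [Finset.sum_comm]
      exact Finset.sum_congr rfl fun q _ => Finset.sum_congr rfl fun p _ => by ring
  have h2 : ∑ i, ∑ p, ∑ q, v i * v p * v q * D q i p = C :=
    Finset.sum_congr rfl fun i _ => Finset.sum_congr rfl fun p _ =>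
      Finset.sum_congr rfl fun q _ => by ring
  have h3 : ∑ i, ∑ p, ∑ q, v i * v p * v q * D i p q = C := by
    rw [Finset.sum_comm]
    exact Finset.sum_congr rfl fun p _ => Finset.sum_comm
  calc ∑ i, ∑ j, g x i j * v i * christoffelQuad g x v j
      = ∑ i, ∑ p, ∑ q, v i * v p * v q * ∑ j, g x i j * christoffel g j p q x := by
        refine Finset.sum_congr rfl fun i _ => ?_
        simp only [christoffelQuad, Finset.mul_sum]
        rw [Finset.sum_comm]
        refine Finset.sum_congr rfl fun p _ => ?_
        rw [Finset.sum_comm]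
        exact Finset.sum_congr rfl fun q _ => Finset.sum_congr rfl fun j _ => by ring
    _ = ∑ i, ∑ p, ∑ q, v i * v p * v q * ((1 / 2) * (D p i q + D q i p - D i p q)) := by
        simp only [sum_mul_christoffel g x hg, D]
    _ = (1 / 2) * (∑ i, ∑ p, ∑ q, v i * v p * v q * D p i q
          + ∑ i, ∑ p, ∑ q, v i * v p * v q * D q i p
          - ∑ i, ∑ p, ∑ q, v i * v p * v q * D i p q) := by
        simp only [Finset.mul_sum, ← Finset.sum_add_distrib, ← Finset.sum_sub_distrib]
        exact Finset.sum_congr rfl fun i _ => Finset.sum_congr rfl fun p _ =>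
          Finset.sum_congr rfl fun q _ => by ring
    _ = _ := by rw [h1, h2, h3, hC]; ring

lemma sum_fderiv_mul_sub_sum_mul_christoffelQuad {ξ : (Fin n → ℝ) → Fin n → ℝ} {ψ : ℝ}
    (hhom : ∀ i j,
      fderiv ℝ (fun y => ξ y i) x (Pi.single j 1)
        + fderiv ℝ (fun y => ξ y j) x (Pi.single i 1)
        - 2 * ∑ l, christoffel g l i j x * ξ x l
        = 2 * ψ * g x i j) (v : Fin n → ℝ) :
    ∑ i, fderiv ℝ (fun y => ξ y i) x v * v i - ∑ l, ξ x l * christoffelQuad g x v l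
      = ψ * ∑ i, ∑ j, g x i j * v i * v j := by
  set Dv := ∑ i, fderiv ℝ (fun y => ξ y i) x v * v i
  have hD : ∑ i, ∑ j, fderiv ℝ (fun y => ξ y i) x (Pi.single j 1) * v i * v j = Dv := by
    refine Finset.sum_congr rfl fun i _ => ?_
    simp only [apply_eq_sum_mul_apply_single _ v, Finset.sum_mul]
    exact Finset.sum_congr rfl fun j _ => by ring
  have hD' : ∑ i, ∑ j, fderiv ℝ (fun y => ξ y j) x (Pi.single i 1) * v i * v j = Dv := by
    rw [Finset.sum_comm, ← hD]
    exact Finset.sum_congr rfl fun i _ => Finset.sum_congr rfl fun j _ => by ring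
  set B := fun i j => ∑ l, christoffel g l i j x * ξ x l
  have hB : ∑ i, ∑ j, B i j * v i * v j = ∑ l, ξ x l * christoffelQuad g x v l := by
    simp only [B, christoffelQuad, Finset.sum_mul, Finset.mul_sum]
    symm
    rw [Finset.sum_comm]
    refine Finset.sum_congr rfl fun i _ => ?_
    rw [Finset.sum_comm]
    exact Finset.sum_congr rfl fun j _ => Finset.sum_congr rfl fun l _ => by ring
  calc Dv - ∑ l, ξ x l * christoffelQuad g x v l
      = (1 / 2) * (∑ i, ∑ j, fderiv ℝ (fun y => ξ y i) x (Pi.single j 1) * v i * v j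
          + ∑ i, ∑ j, fderiv ℝ (fun y => ξ y j) x (Pi.single i 1) * v i * v j
          - 2 * ∑ i, ∑ j, B i j * v i * v j) := by
        rw [hD, hD', hB]; ring
    _ = (1 / 2) * ∑ i, ∑ j, (fderiv ℝ (fun y => ξ y i) x (Pi.single j 1)
          + fderiv ℝ (fun y => ξ y j) x (Pi.single i 1)
          - 2 * B i j) * v i * v j := by
        simp only [Finset.mul_sum, ← Finset.sum_add_distrib, ← Finset.sum_sub_distrib]
        exact Finset.sum_congr rfl fun i _ => Finset.sum_congr rfl fun j _ => by ring
    _ = (1 / 2) * ∑ i, ∑ j, (2 * ψ * g x i j) * v i * v j := by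
        simp only [B, hhom]
    _ = ψ * ∑ i, ∑ j, g x i j * v i * v j := by
        simp only [Finset.mul_sum]
        exact Finset.sum_congr rfl fun i _ => Finset.sum_congr rfl fun j _ => by ring

end Christoffel

noncomputable def velocity (γ : ℝ → Fin n → ℝ) (t : ℝ) : Fin n → ℝ :=
  fun i => deriv (fun u => γ u i) t

namespace IsGeodesic

variable {g : (Fin n → ℝ) → Matrix (Fin n) (Fin n) ℝ} {γ : ℝ → Fin n → ℝ}

lemma hasDerivAt (hγ : IsGeodesic g γ) (t : ℝ) : HasDerivAt γ (velocity γ t) t :=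
  hasDerivAt_pi.2 fun i => ((hγ.1 i).differentiable two_ne_zero t).hasDerivAt

lemma hasDerivAt_velocity (hγ : IsGeodesic g γ) (i : Fin n) (t : ℝ) :
    HasDerivAt (fun u => velocity γ u i) (-christoffelQuad g (γ t) (velocity γ t) i) t := by
  have h := ((hγ.1 i).differentiable_deriv_two t).hasDerivAt
  rwa [hγ.2 t i] at h

lemma hasDerivAt_comp (hγ : IsGeodesic g γ) {f : (Fin n → ℝ) → ℝ} {t : ℝ}
    (hf : DifferentiableAt ℝ f (γ t)) :
    HasDerivAt (fun u => f (γ u)) (fderiv ℝ f (γ t) (velocity γ t)) t :=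
  hf.hasFDerivAt.comp_hasDerivAt t (hγ.hasDerivAt t)

lemma hasDerivAt_energy (hγ : IsGeodesic g γ) (hg_symm : ∀ x i j, g x i j = g x j i)
    (hg_inv : ∀ x, IsUnit (g x).det) (hg_diff : ∀ i j, Differentiable ℝ fun x => g x i j)
    (t : ℝ) :
    HasDerivAt (fun u => ∑ i, ∑ j, g (γ u) i j * velocity γ u i * velocity γ u j) 0 t := by
  set x := γ t
  set v := velocity γ t
  set Γv := christoffelQuad g x v
  have hswap : ∑ i, ∑ j, g x i j * Γv i * v j = ∑ i, ∑ j, g x i j * v i * Γv j := by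
    rw [Finset.sum_comm]
    exact Finset.sum_congr rfl fun i _ => Finset.sum_congr rfl fun j _ => by
      rw [hg_symm x j i]; ring
  have hzero : (0 : ℝ) = ∑ i, ∑ j, ((fderiv ℝ (fun y => g y i j) x v * v i
      + g x i j * -Γv i) * v j + g x i j * v i * -Γv j) := calc
    (0 : ℝ) = ∑ i, ∑ j, fderiv ℝ (fun y => g y i j) x v * v i * v j
          - 2 * ∑ i, ∑ j, g x i j * v i * Γv j := by
        rw [sum_metric_mul_christoffelQuad g x (hg_inv x)]; ring
    _ = ∑ i, ∑ j, fderiv ℝ (fun y => g y i j) x v * v i * v j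
          - ∑ i, ∑ j, g x i j * Γv i * v j - ∑ i, ∑ j, g x i j * v i * Γv j := by
        rw [hswap]; ring
    _ = _ := by
        simp only [← Finset.sum_sub_distrib]
        exact Finset.sum_congr rfl fun i _ => Finset.sum_congr rfl fun j _ => by ring
  rw [hzero]
  exact HasDerivAt.fun_sum fun i _ => HasDerivAt.fun_sum fun j _ =>
    ((hγ.hasDerivAt_comp (hg_diff i j x)).mul (hγ.hasDerivAt_velocity i t)).mul
      (hγ.hasDerivAt_velocity j t)

lemma hasDerivAt_sum_mul_velocity (hγ : IsGeodesic g γ) {ξ : (Fin n → ℝ) → Fin n → ℝ} {ψ : ℝ}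
    (hξ_diff : ∀ i, Differentiable ℝ fun x => ξ x i)
    (hhom : ∀ x i j,
      fderiv ℝ (fun y => ξ y i) x (Pi.single j 1)
        + fderiv ℝ (fun y => ξ y j) x (Pi.single i 1)
        - 2 * ∑ l, christoffel g l i j x * ξ x l
        = 2 * ψ * g x i j) (t : ℝ) :
    HasDerivAt (fun u => ∑ i, ξ (γ u) i * velocity γ u i)
      (ψ * ∑ i, ∑ j, g (γ t) i j * velocity γ t i * velocity γ t j) t := by
  rw [← sum_fderiv_mul_sub_sum_mul_christoffelQuad g (γ t) (hhom (γ t)), ← Finset.sum_sub_distrib]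
  refine (HasDerivAt.fun_sum fun i _ =>
    (hγ.hasDerivAt_comp (hξ_diff i (γ t))).mul (hγ.hasDerivAt_velocity i t)).congr_deriv ?_
  exact Finset.sum_congr rfl fun i _ => by ring

end IsGeodesic

theorem homothetic_noether_first_integral_general {n : ℕ}
    (g : (Fin n → ℝ) → Matrix (Fin n) (Fin n) ℝ)
    (hg_symm : ∀ x i j, g x i j = g x j i)
    (hg_inv : ∀ x, IsUnit (g x).det)
    (hg_C1 : ∀ i j, ContDiff ℝ 1 fun x => g x i j)
    (ξ : (Fin n → ℝ) → Fin n → ℝ) (ψ : ℝ)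
    (hξ_C1 : ∀ i, ContDiff ℝ 1 fun x => ξ x i)
    (hhom : ∀ x i j,
      fderiv ℝ (fun y => ξ y i) x (Pi.single j 1)
        + fderiv ℝ (fun y => ξ y j) x (Pi.single i 1)
        - 2 * ∑ l, christoffel g l i j x * ξ x l
        = 2 * ψ * g x i j)
    (γ : ℝ → Fin n → ℝ) (hγ : IsGeodesic g γ) (s₁ s₂ : ℝ) :
    ψ * s₁ * (∑ i, ∑ j, g (γ s₁) i j * deriv (fun t => γ t i) s₁ * deriv (fun t => γ t j) s₁)
        - ∑ i, ξ (γ s₁) i * deriv (fun t => γ t i) s₁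
      = ψ * s₂ * (∑ i, ∑ j, g (γ s₂) i j * deriv (fun t => γ t i) s₂ * deriv (fun t => γ t j) s₂)
        - ∑ i, ξ (γ s₂) i * deriv (fun t => γ t i) s₂ := by
  have hg_diff i j := (hg_C1 i j).differentiable one_ne_zero
  have hξ_diff i := (hξ_C1 i).differentiable one_ne_zero
  have hF : ∀ t, HasDerivAt (fun u => ψ * u * ∑ i, ∑ j, g (γ u) i j * velocity γ u i * velocity γ u j
      - ∑ i, ξ (γ u) i * velocity γ u i) 0 t := fun t =>
    ((((hasDerivAt_id t).const_mul ψ).mul (hγ.hasDerivAt_energy hg_symm hg_inv hg_diff t)).sub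
      (hγ.hasDerivAt_sum_mul_velocity hξ_diff hhom t)).congr_deriv (by simp)
  exact is_const_of_deriv_eq_zero (fun t => (hF t).differentiableAt) (fun t => (hF t).deriv) s₁ s₂

/-- A homothetic Killing vector `ξ` with constant homothetic factor `ψ`,
i.e. `∂_j ξ_i + ∂_i ξ_j − 2 Σ_l Γ^l_{ij} ξ_l = 2 ψ g_{ij}`, gives the Noether first
integral `ψ s Σ_{i,j} g_{ij} ẋ^i ẋ^j − Σ_i ξ_i ẋ^i` of the geodesic Lagrangian. -/
theorem homothetic_noether_first_integral {n : ℕ} (hn : 1 ≤ n)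
    (g : (Fin n → ℝ) → Matrix (Fin n) (Fin n) ℝ)
    (hg_symm : ∀ x i j, g x i j = g x j i)
    (hg_inv : ∀ x, IsUnit (g x).det)
    (hg_C1 : ∀ i j, ContDiff ℝ 1 fun x => g x i j)
    (ξ : (Fin n → ℝ) → Fin n → ℝ) (ψ : ℝ)
    (hξ_C1 : ∀ i, ContDiff ℝ 1 fun x => ξ x i)
    (hhom : ∀ x i j,
      fderiv ℝ (fun y => ξ y i) x (Pi.single j 1)
        + fderiv ℝ (fun y => ξ y j) x (Pi.single i 1)
        - 2 * ∑ l, christoffel g l i j x * ξ x l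
        = 2 * ψ * g x i j)
    (γ : ℝ → Fin n → ℝ) (hγ : IsGeodesic g γ) (s₁ s₂ : ℝ) :
    ψ * s₁ * (∑ i, ∑ j, g (γ s₁) i j * deriv (fun t => γ t i) s₁ * deriv (fun t => γ t j) s₁)
        - ∑ i, ξ (γ s₁) i * deriv (fun t => γ t i) s₁
      = ψ * s₂ * (∑ i, ∑ j, g (γ s₂) i j * deriv (fun t => γ t i) s₂ * deriv (fun t => γ t j) s₂)
        - ∑ i, ξ (γ s₂) i * deriv (fun t => γ t i) s₂ :=
  homothetic_noether_first_integral_general g hg_symm hg_inv hg_C1 ξ ψ hξ_C1 hhom γ hγ s₁ s₂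
end

section
/- Suppose S : ℝⁿ → ℝ is twice continuously differentiable and satisfies the gradient-Killing equation ∂_i ∂_j S(x) = Σ_l Γ^l_{ij}(x) ∂_l S(x) for all x and all i, j. Then along every geodesic of g the quantity s · Σ_i ∂_i S(x(s)) ẋ^i(s) − S(x(s)) is constant in s; this is the time-dependent Noether first integral φ_{IJ} = t g_{ij} S^{,i} ẋ^j − S associated with a gradient Killing vector. -/
open Finset

section

variable {n : ℕ}

theorem DifferentiableAt.hasDerivAt_comp_curve {f : (Fin n → ℝ) → ℝ} {γ : ℝ → Fin n → ℝ} {s : ℝ}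
    (hf : DifferentiableAt ℝ f (γ s)) (hγ : ∀ i, DifferentiableAt ℝ (fun t => γ t i) s) :
    HasDerivAt (fun t => f (γ t))
      (∑ i, fderiv ℝ f (γ s) (Pi.single i 1) * deriv (fun t => γ t i) s) s := by
  have hγ' : HasDerivAt γ (fun i => deriv (fun t => γ t i) s) s :=
    hasDerivAt_pi.2 fun i => (hγ i).hasDerivAt
  refine (hf.hasFDerivAt.comp_hasDerivAt s hγ').congr_deriv ?_
  conv_lhs => rw [← univ_sum_single (fun i => deriv (fun t => γ t i) s)]
  refine (map_sum _ _ _).trans (sum_congr rfl fun i _ => ?_)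
  rw [mul_comm, ← smul_eq_mul, ← map_smul, ← Pi.single_smul', smul_eq_mul, mul_one]

-- Both sums are the full contraction `Γ^a_{bc} d_a v^b v^c`, with the indices named differently.
theorem sum_christoffel_contraction_eq_zero (Γ : Fin n → Fin n → Fin n → ℝ) (d v : Fin n → ℝ) :
    ∑ i, ((∑ j, (∑ l, Γ l j i * d l) * v j) * v i + d i * -∑ j, ∑ k, Γ i j k * v j * v k) = 0 := by
  simp only [mul_neg, ← sub_eq_add_neg, sum_sub_distrib, sum_mul, mul_sum, sub_eq_zero]
  conv_lhs => rw [sum_comm]; arg 2; ext j; rw [sum_comm]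
  rw [sum_comm]
  exact sum_congr rfl fun _ _ => sum_congr rfl fun _ _ => sum_congr rfl fun _ _ => by ring

theorem hasDerivAt_sum_fderiv_mul_deriv_eq_zero (Γ : Fin n → Fin n → Fin n → (Fin n → ℝ) → ℝ)
    {S : (Fin n → ℝ) → ℝ} (hS : ContDiff ℝ 2 S) {γ : ℝ → Fin n → ℝ}
    (hγ : ∀ i, ContDiff ℝ 2 fun t => γ t i) {s : ℝ}
    (hHess : ∀ i j, fderiv ℝ (fun y => fderiv ℝ S y (Pi.single j 1)) (γ s) (Pi.single i 1)
      = ∑ l, Γ l i j (γ s) * fderiv ℝ S (γ s) (Pi.single l 1))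
    (hgeo : ∀ i, deriv (deriv fun t => γ t i) s
      = -∑ j, ∑ k, Γ i j k (γ s) * deriv (fun t => γ t j) s * deriv (fun t => γ t k) s) :
    HasDerivAt (fun t => ∑ i, fderiv ℝ S (γ t) (Pi.single i 1) * deriv (fun u => γ u i) t) 0 s := by
  have hγ_diff : ∀ i, DifferentiableAt ℝ (fun t => γ t i) s :=
    fun i => ((hγ i).differentiable two_ne_zero).differentiableAt
  have hγ'_diff : ∀ i, DifferentiableAt ℝ (deriv fun t => γ t i) s := fun i =>
    (((contDiff_succ_iff_deriv (n := 1)).1 (hγ i)).2.2.differentiable one_ne_zero).differentiableAt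
  have hdS_diff : ∀ i, DifferentiableAt ℝ (fun y => fderiv ℝ S y (Pi.single i 1)) (γ s) := fun i =>
    (((hS.fderiv_right le_rfl).differentiable one_ne_zero).differentiableAt).clm_apply
      (differentiableAt_const _)
  refine (HasDerivAt.fun_sum fun i _ => ((hdS_diff i).hasDerivAt_comp_curve hγ_diff).mul
    (hγ'_diff i).hasDerivAt).congr_deriv ?_
  simp only [hHess, hgeo]
  exact sum_christoffel_contraction_eq_zero _ _ _

end

theorem gradient_killing_time_dependent_first_integral_general {n : ℕ}
    (g : (Fin n → ℝ) → Matrix (Fin n) (Fin n) ℝ)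
    (S : (Fin n → ℝ) → ℝ) (hS : ContDiff ℝ 2 S)
    (hgradKV : ∀ x i j,
      fderiv ℝ (fun y => fderiv ℝ S y (Pi.single j 1)) x (Pi.single i 1)
        = ∑ l, christoffel g l i j x * fderiv ℝ S x (Pi.single l 1))
    (γ : ℝ → Fin n → ℝ) (hγ : IsGeodesic g γ) (s₁ s₂ : ℝ) :
    s₁ * (∑ i, fderiv ℝ S (γ s₁) (Pi.single i 1) * deriv (fun t => γ t i) s₁) - S (γ s₁)
      = s₂ * (∑ i, fderiv ℝ S (γ s₂) (Pi.single i 1) * deriv (fun t => γ t i) s₂) - S (γ s₂) := by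
  obtain ⟨hγ_C2, hgeo⟩ := hγ
  have hF : ∀ s, HasDerivAt (fun t =>
      t * (∑ i, fderiv ℝ S (γ t) (Pi.single i 1) * deriv (fun u => γ u i) t) - S (γ t)) 0 s := by
    intro s
    have hP := hasDerivAt_sum_fderiv_mul_deriv_eq_zero (christoffel g) hS hγ_C2
      (hgradKV (γ s)) (hgeo s)
    have hSγ := (hS.differentiable two_ne_zero (γ s)).hasDerivAt_comp_curve
      fun i => (hγ_C2 i).differentiable two_ne_zero s
    simpa using ((hasDerivAt_id' s).fun_mul hP).fun_sub hSγ
  exact is_const_of_deriv_eq_zero (fun s => (hF s).differentiableAt) (fun s => (hF s).deriv) s₁ s₂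

/-- A gradient Killing vector generated by `S` (`∂_i ∂_j S = Σ_l Γ^l_{ij} ∂_l S`)
gives the time-dependent Noether first integral `s Σ_i ∂_i S(x(s)) ẋ^i(s) − S(x(s))`
of the geodesic equations. -/
theorem gradient_killing_time_dependent_first_integral {n : ℕ} (hn : 1 ≤ n)
    (g : (Fin n → ℝ) → Matrix (Fin n) (Fin n) ℝ)
    (hg_symm : ∀ x i j, g x i j = g x j i)
    (hg_inv : ∀ x, IsUnit (g x).det)
    (hg_C1 : ∀ i j, ContDiff ℝ 1 fun x => g x i j)
    (S : (Fin n → ℝ) → ℝ) (hS : ContDiff ℝ 2 S)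
    (hgradKV : ∀ x i j,
      fderiv ℝ (fun y => fderiv ℝ S y (Pi.single j 1)) x (Pi.single i 1)
        = ∑ l, christoffel g l i j x * fderiv ℝ S x (Pi.single l 1))
    (γ : ℝ → Fin n → ℝ) (hγ : IsGeodesic g γ) (s₁ s₂ : ℝ) :
    s₁ * (∑ i, fderiv ℝ S (γ s₁) (Pi.single i 1) * deriv (fun t => γ t i) s₁) - S (γ s₁)
      = s₂ * (∑ i, fderiv ℝ S (γ s₂) (Pi.single i 1) * deriv (fun t => γ t i) s₂) - S (γ s₂) :=
  gradient_killing_time_dependent_first_integral_general g S hS hgradKV γ hγ s₁ s₂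
end
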